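/- arXiv:0910.4699 — 6 statements merged into one kernel-verified Lean document; each statement's English description precedes it below -/
import Mathlib

section
/- For every n ≥ 2 and every k with 1 ≤ k ≤ n−1, no deterministic strategyproof k-selection mechanism has a finite approximation ratio. Concretely: for every deterministic SP k-selection mechanism f on N = {1,…,n} there exists a directed graph G on N that contains at least one edge but such that every agent in f(G) has indegree zero in G. -/
/-- A directed graph on `Fin n` assigns to each agent its set of outgoing edges;
validity means no self-loops. The indegree of `j` is the number of agents `i`
with `j ∈ G i`.

STATEMENT 0: no deterministic SP `k`-selection mechanism has a finite
approximation ratio: there is a graph with at least one edge on which every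
selected agent has indegree zero. -/
theorem stmt_0 (n k : ℕ) (hn : 2 ≤ n) (hk1 : 1 ≤ k) (hk2 : k ≤ n - 1)
    (f : (Fin n → Finset (Fin n)) → Finset (Fin n))
    (hcard : ∀ G : Fin n → Finset (Fin n), (∀ i, i ∉ G i) → (f G).card = k)
    (hSP : ∀ (i : Fin n) (G G' : Fin n → Finset (Fin n)),
      (∀ a, a ∉ G a) → (∀ a, a ∉ G' a) → (∀ a, a ≠ i → G a = G' a) →
      (i ∈ f G ↔ i ∈ f G')) :
    ∃ G : Fin n → Finset (Fin n), (∀ i, i ∉ G i) ∧ (∃ i j, j ∈ G i) ∧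
      ∀ j ∈ f G, (Finset.univ.filter (fun i => j ∈ G i)).card = 0 := by
  classical
  by_contra hcon
  push_neg at hcon
  have h0 : ∀ i : Fin n, i ∉ (fun _ => (∅ : Finset (Fin n))) i :=
    fun i => Finset.notMem_empty i
  -- choose an agent j not selected on the empty graph
  obtain ⟨j, hj⟩ : ∃ j : Fin n, j ∉ f (fun _ => ∅) := by
    by_contra h
    push_neg at h
    have hsub : (Finset.univ : Finset (Fin n)) ⊆ f (fun _ => ∅) := fun x _ => h x
    have hle := Finset.card_le_card hsub
    rw [hcard _ h0, Finset.card_univ, Fintype.card_fin] at hle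
    omega
  -- star graphs: agents in S vote for j, others vote nothing
  set star : Finset (Fin n) → Fin n → Finset (Fin n) :=
    fun S i => if i ∈ S then {j} else ∅ with hstar
  have hvalid : ∀ S : Finset (Fin n), j ∉ S → ∀ i, i ∉ star S i := by
    intro S hjS i
    simp only [hstar]
    split_ifs with h
    · simp only [Finset.mem_singleton]
      rintro rfl; exact hjS h
    · exact Finset.notMem_empty i
  have hstar_empty : star ∅ = fun _ => ∅ := by
    funext i; simp [hstar]
  -- j is selected on every nonempty star into j
  have hjin : ∀ S : Finset (Fin n), j ∉ S → S.Nonempty → j ∈ f (star S) := by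
    intro S hjS hNe
    obtain ⟨s, hs⟩ := hNe
    obtain ⟨a, haf, hac⟩ := hcon (star S) (hvalid S hjS) ⟨s, j, by simp [hstar, hs]⟩
    have hex : ∃ i, a ∈ star S i := by
      by_contra h
      push_neg at h
      exact hac (by rw [Finset.card_eq_zero]; ext i; simp [h i])
    obtain ⟨i, hi⟩ := hex
    simp only [hstar] at hi
    split_ifs at hi with h
    · rw [Finset.mem_singleton] at hi; rwa [hi] at haf
    · exact absurd hi (Finset.notMem_empty a)
  set M : Finset (Fin n) := Finset.univ.erase j with hM
  have hjM : j ∉ M := Finset.notMem_erase j _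
  have hMcard : M.card = n - 1 := by
    rw [hM, Finset.card_erase_of_mem (Finset.mem_univ j), Finset.card_univ,
      Fintype.card_fin]
  have hpow0 : ((M.powerset.card : ℕ) : ZMod 2) = 0 := by
    rw [Finset.card_powerset, hMcard]
    have h1 : n - 1 ≠ 0 := by omega
    rw [Nat.cast_pow]
    rw [show ((2 : ℕ) : ZMod 2) = 0 by decide]
    exact zero_pow h1
  set ind : Fin n → Finset (Fin n) → ZMod 2 :=
    fun a S => if a ∈ f (star S) then 1 else 0 with hind
  -- row sums: each star selects exactly k agents
  have hrow : ∀ S ∈ M.powerset, (∑ a : Fin n, ind a S) = ((k : ℕ) : ZMod 2) := by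
    intro S hS
    have hjS : j ∉ S := fun h => hjM (Finset.mem_powerset.mp hS h)
    simp only [hind]
    rw [Finset.sum_boole]
    rw [Finset.filter_mem_eq_inter, Finset.univ_inter, hcard _ (hvalid S hjS)]
  -- column sum at j is 1 (selected for all S except S = ∅)
  have hcolj : (∑ S ∈ M.powerset, ind j S) = 1 := by
    have heq : ∀ S ∈ M.powerset, ind j S = 1 + (if S = (∅ : Finset (Fin n)) then 1 else 0) := by
      intro S hS
      have hjS : j ∉ S := fun h => hjM (Finset.mem_powerset.mp hS h)
      rcases eq_or_ne S ∅ with rfl | hne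
      · simp only [hind, hstar_empty, if_pos rfl]
        rw [if_neg hj]; decide
      · have := hjin S hjS (Finset.nonempty_iff_ne_empty.mpr hne)
        simp only [hind, if_pos this, if_neg hne]
        decide
    rw [Finset.sum_congr rfl heq, Finset.sum_add_distrib, Finset.sum_const,
      Finset.sum_ite_eq' M.powerset (∅ : Finset (Fin n)) (fun _ => (1 : ZMod 2)),
      if_pos (Finset.empty_mem_powerset M), nsmul_eq_mul, hpow0]
    ring
  -- column sums at a ≠ j vanish (strategyproofness pairing S ↔ insert a S)
  have hcolne : ∀ a : Fin n, a ≠ j → (∑ S ∈ M.powerset, ind a S) = 0 := by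
    intro a ha
    have haM : a ∈ M := Finset.mem_erase.mpr ⟨ha, Finset.mem_univ a⟩
    have hins : M = insert a (M.erase a) := (Finset.insert_erase haM).symm
    rw [hins, Finset.sum_powerset_insert (Finset.notMem_erase a M)]
    have key : ∀ t ∈ (M.erase a).powerset, ind a (insert a t) = ind a t := by
      intro t ht
      have htsub : t ⊆ M.erase a := Finset.mem_powerset.mp ht
      have hat : a ∉ t := fun h => Finset.notMem_erase a M (htsub h)
      have hjt : j ∉ t := fun h => hjM (Finset.mem_of_mem_erase (htsub h))
      have hjins : j ∉ insert a t := by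
        rw [Finset.mem_insert]
        rintro (rfl | h)
        · exact ha rfl
        · exact hjt h
      have hagree : ∀ b : Fin n, b ≠ a → star t b = star (insert a t) b := by
        intro b hb
        simp only [hstar, Finset.mem_insert, hb, false_or]
      have hiff := hSP a (star t) (star (insert a t)) (hvalid t hjt)
        (hvalid _ hjins) hagree
      simp only [hind]
      rw [if_congr hiff.symm rfl rfl]
    rw [Finset.sum_congr rfl key, CharTwo.add_self_eq_zero]
  -- double counting gives a contradiction in ZMod 2
  have hswap : (∑ S ∈ M.powerset, ∑ a : Fin n, ind a S)
      = ∑ a : Fin n, ∑ S ∈ M.powerset, ind a S := Finset.sum_comm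
  rw [Finset.sum_congr rfl hrow, Finset.sum_const, nsmul_eq_mul, hpow0, zero_mul] at hswap
  rw [Finset.sum_eq_single_of_mem j (Finset.mem_univ j)
    (fun b _ hb => hcolne b hb), hcolj] at hswap
  exact one_ne_zero hswap.symm
end

section
/- Let n ≥ 2 and 1 ≤ k ≤ n−1. There is no function f from boolean vectors x ∈ {0,1}^{n−1} to k-element subsets of {1,…,n} satisfying all of: (i) n ∉ f(0,…,0); (ii) for every x ≠ (0,…,0), n ∈ f(x); (iii) for every i ∈ {1,…,n−1} and every x, i ∈ f(x) ⟺ i ∈ f(x + e_i), where x + e_i denotes x with its i-th coordinate flipped. -/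
/-!
Double count the pairs `(x, a)` with `a ∈ f x`. Counted by vectors there are `k * 2 ^ (n - 1)`
of them, an even number. Counted by agents, agent `n` is selected at the `2 ^ (n - 1) - 1`
nonzero vectors, an odd number, while for every other agent `i`, flipping the `i`-th coordinate
is a fixed-point-free involution of the vectors selecting `i`, so these come in pairs.
-/

open Finset Function

theorem even_card_filter_of_flip_invariant {ι : Type*} [Fintype ι] [DecidableEq ι] (i : ι)
    (p : (ι → Bool) → Prop) [DecidablePred p] (hp : ∀ x, p x ↔ p (update x i (!x i))) :
    Even #{x | p x} := by
  have flip_flip : ∀ x : ι → Bool, update (update x i (!x i)) i (!(update x i (!x i)) i) = x :=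
    fun x => by simp
  have halves : #{x | p x ∧ x i = true} = #{x | p x ∧ ¬x i = true} := by
    refine card_nbij' (fun x => update x i (!x i)) (fun x => update x i (!x i)) ?_ ?_
      (fun x _ => flip_flip x) (fun x _ => flip_flip x) <;>
    · intro x hx
      simp only [coe_filter, mem_univ, true_and, Set.mem_ofPred_eq] at hx ⊢
      exact ⟨(hp x).mp hx.1, by simp [hx.2]⟩
  rw [← card_filter_add_card_filter_not (fun x => x i = true), filter_filter, filter_filter,
    halves]
  exact ⟨_, rfl⟩

theorem odd_card_filter_ne {α : Type*} [Fintype α] [DecidableEq α] (hα : Even (Fintype.card α))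
    (hpos : 0 < Fintype.card α) (a : α) : Odd #{x | x ≠ a} := by
  rw [filter_ne', card_erase_of_mem (mem_univ a), card_univ]
  exact Nat.Even.sub_odd hpos hα odd_one

theorem sum_card_eq_sum_card_filter_mem {α β : Type*} [Fintype α] [Fintype β] [DecidableEq α]
    (f : β → Finset α) : ∑ x, #(f x) = ∑ a, #{x | a ∈ f x} := by
  simpa [bipartiteAbove, bipartiteBelow] using
    sum_card_bipartiteAbove_eq_sum_card_bipartiteBelow (s := univ) (t := univ) (fun x a => a ∈ f x)

theorem false_of_flip_invariant_selection {ι α : Type*} [Fintype ι] [DecidableEq ι] [Nonempty ι]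
    [Fintype α] [DecidableEq α] (agent : ι → α) (e : α) (hagent : ∀ a, a ≠ e → ∃ i, agent i = a)
    (f : (ι → Bool) → Finset α) (k : ℕ) (hcard : ∀ x, #(f x) = k)
    (he : ∀ x, e ∈ f x ↔ x ≠ fun _ => false)
    (hflip : ∀ i x, agent i ∈ f x ↔ agent i ∈ f (update x i (!x i))) : False := by
  have hcube : Even (Fintype.card (ι → Bool)) := by
    rw [Fintype.card_fun, Fintype.card_bool]
    exact (Nat.even_pow' Fintype.card_ne_zero).2 even_two
  have htotal_even : Even (∑ x, #(f x)) := by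
    simp only [hcard, sum_const, card_univ, smul_eq_mul]
    exact hcube.mul_right k
  have htotal_odd : Odd (∑ a, #{x | a ∈ f x}) := by
    rw [Fintype.sum_eq_add_sum_compl e]
    refine Odd.add_even ?_ (even_sum _ fun a ha => ?_)
    · simp only [he]
      exact odd_card_filter_ne hcube Fintype.card_pos _
    · obtain ⟨i, rfl⟩ := hagent a (by simpa using ha)
      exact even_card_filter_of_flip_invariant i _ (hflip i)
  rw [sum_card_eq_sum_card_filter_mem] at htotal_even
  exact Nat.not_even_iff_odd.2 htotal_odd htotal_even

/-- there is no function `f` from boolean vectors in `{0,1}^{n-1}`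
to `k`-element subsets of `{1,…,n}` (here `Fin n`, with agent `n` being
`⟨n-1,_⟩`) such that agent `n` is not selected at the all-zero vector, is
selected at every other vector, and such that for each `i ∈ {1,…,n-1}` the
selection of `i` is invariant under flipping the `i`-th coordinate. -/
theorem stmt_1 (n k : ℕ) (hn : 2 ≤ n) :
    ¬ ∃ f : (Fin (n - 1) → Bool) → Finset (Fin n),
      (∀ x, (f x).card = k) ∧
      ((⟨n - 1, by omega⟩ : Fin n) ∉ f (fun _ => false)) ∧
      (∀ x : Fin (n - 1) → Bool, x ≠ (fun _ => false) →
        (⟨n - 1, by omega⟩ : Fin n) ∈ f x) ∧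
      (∀ (i : Fin (n - 1)) (x : Fin (n - 1) → Bool),
        (⟨i.val, by omega⟩ : Fin n) ∈ f x ↔
          (⟨i.val, by omega⟩ : Fin n) ∈ f (Function.update x i (!x i))) := by
  rintro ⟨f, hcard, h0, hsel, hflip⟩
  have : Nonempty (Fin (n - 1)) := ⟨⟨0, by omega⟩⟩
  refine false_of_flip_invariant_selection (fun i => ⟨i.val, by omega⟩) ⟨n - 1, by omega⟩
    (fun a ha => ?_) f k hcard (fun x => ?_) hflip
  · have : a.val ≠ n - 1 := fun h => ha (Fin.ext h)
    exact ⟨⟨a.val, by omega⟩, rfl⟩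
  · by_cases hx : x = fun _ => false
    · subst hx
      simpa using h0
    · simpa [hx] using hsel x hx
end

section
/- For every n ≥ 2 and every k with 1 ≤ k ≤ n−1, there exists a randomized strategyproof k-selection mechanism on N = {1,…,n} with approximation ratio at most 4: for every directed graph G on N, max_{S ⊆ N, |S| = k} Σ_{j∈S} deg(j,G) ≤ 4 · E_{S ∼ f(G)}[Σ_{j∈S} deg(j,G)]. -/
/-!
Use the random partition mechanism: draw a uniformly random set `A` of agents, take the (at most
`k`) members of `A` with the most votes from outside `A`, and complete them to a `k`-set uniformly
at random. An agent in `A` cannot change the votes counted for members of `A`, and an agent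
outside `A` can only be picked by the completion, whose chance of picking it depends on nothing
but `min k #A`; so the mechanism is strategyproof. For a `k`-set `K`, the chosen members of `A`
collect at least as many outside votes as `K ∩ A`, and an edge `a → j` with `j ∈ K` counts there
exactly when `j ∈ A` and `a ∉ A`, which happens with probability `1/4`.
-/

open Finset
open scoped BigOperators

namespace RandomPartition

section TopSubset

variable {α : Type*} (k : ℕ) (A : Finset α) (w : α → ℕ)

theorem exists_max_sum_mem_powersetCard :
    ∃ T ∈ A.powersetCard (min k #A), ∀ U ∈ A.powersetCard (min k #A),
      ∑ j ∈ U, w j ≤ ∑ j ∈ T, w j :=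
  exists_max_image _ _ (powersetCard_nonempty.mpr (min_le_right _ _))

noncomputable def topSubset : Finset α :=
  (exists_max_sum_mem_powersetCard k A w).choose

theorem topSubset_mem_powersetCard : topSubset k A w ∈ A.powersetCard (min k #A) :=
  (exists_max_sum_mem_powersetCard k A w).choose_spec.1

theorem topSubset_subset : topSubset k A w ⊆ A :=
  (mem_powersetCard.mp (topSubset_mem_powersetCard k A w)).1

theorem card_topSubset : #(topSubset k A w) = min k #A :=
  (mem_powersetCard.mp (topSubset_mem_powersetCard k A w)).2

theorem sum_le_sum_topSubset {U : Finset α} (hUA : U ⊆ A) (hUk : #U ≤ k) :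
    ∑ j ∈ U, w j ≤ ∑ j ∈ topSubset k A w, w j := by
  obtain ⟨V, hUV, hVA, hV⟩ :=
    exists_subsuperset_card_eq hUA (le_min hUk (card_le_card hUA)) (min_le_right k #A)
  calc ∑ j ∈ U, w j ≤ ∑ j ∈ V, w j := sum_le_sum_of_subset hUV
    _ ≤ _ := (exists_max_sum_mem_powersetCard k A w).choose_spec.2 V
      (mem_powersetCard.mpr ⟨hVA, hV⟩)

end TopSubset

section Completions

variable {α : Type*} [Fintype α] [DecidableEq α]

def completions (k : ℕ) (T : Finset α) : Finset (Finset α) :=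
  {S ∈ powersetCard k univ | T ⊆ S}

variable {k : ℕ} {T : Finset α}

theorem mem_completions {S : Finset α} : S ∈ completions k T ↔ #S = k ∧ T ⊆ S := by
  simp [completions]

theorem card_completions (hT : #T ≤ k) :
    #(completions k T) = (Fintype.card α - #T).choose (k - #T) := by
  rw [completions, card_filter_powersetCard_subset _ _ _ (subset_univ T) hT, card_univ]

theorem completions_nonempty (hT : #T ≤ k) (hk : k ≤ Fintype.card α) :
    (completions k T).Nonempty := by
  rw [← card_pos, card_completions hT]
  exact Nat.choose_pos (by omega)

theorem card_filter_notMem_completions {i : α} (hi : i ∉ T) (hT : #T ≤ k) :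
    #{S ∈ completions k T | i ∉ S} = (Fintype.card α - 1 - #T).choose (k - #T) := by
  have h : {S ∈ completions k T | i ∉ S} = {S ∈ powersetCard k (univ.erase i) | T ⊆ S} := by
    ext S
    simp only [completions, mem_filter, mem_powersetCard, subset_erase, subset_univ, true_and]
    tauto
  rw [h, card_filter_powersetCard_subset _ _ _ (subset_erase.mpr ⟨subset_univ T, hi⟩) hT,
    card_erase_of_mem (mem_univ i), card_univ]

theorem card_filter_mem_completions_eq {T' : Finset α} {i : α} (hi : i ∉ T) (hi' : i ∉ T')
    (hT : #T ≤ k) (hTT' : #T = #T') :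
    #{S ∈ completions k T | i ∈ S} = #{S ∈ completions k T' | i ∈ S} := by
  have h := card_filter_add_card_filter_not (s := completions k T) (fun S => i ∈ S)
  have h' := card_filter_add_card_filter_not (s := completions k T') (fun S => i ∈ S)
  rw [card_filter_notMem_completions hi hT, card_completions hT] at h
  rw [card_filter_notMem_completions hi' (hTT' ▸ hT), card_completions (hTT' ▸ hT), ← hTT'] at h'
  omega

end Completions

section Mechanism

variable {α : Type*} [Fintype α] [DecidableEq α]

theorem card_filter_mem_notMem {a j : α} (h : a ≠ j) :
    #{A : Finset α | j ∈ A ∧ a ∉ A} = 2 ^ (Fintype.card α - 2) := by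
  have hIcc : ({A | j ∈ A ∧ a ∉ A} : Finset (Finset α)) = Icc {j} (univ.erase a) := by
    ext A
    simp [subset_erase]
  rw [hIcc, card_Icc_finset (by simpa using h.symm), card_erase_of_mem (mem_univ a),
    card_singleton, card_univ, Nat.sub_sub]

theorem expect_mem_notMem {a j : α} (h : a ≠ j) :
    𝔼 A : Finset α, (if j ∈ A ∧ a ∉ A then 1 else 0 : ℝ) = 4⁻¹ := by
  have h2 : 2 ≤ Fintype.card α := Fintype.one_lt_card_iff.mpr ⟨a, j, h⟩
  rw [Fintype.expect_eq_sum_div_card, sum_boole, card_filter_mem_notMem h, Fintype.card_finset,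
    ← Nat.sub_add_cancel h2, pow_add]
  push_cast
  field_simp

def indeg (G : α → Finset α) (j : α) : ℕ := #{a | j ∈ G a}

def outsideIndeg (G : α → Finset α) (A : Finset α) (j : α) : ℕ := #{a | a ∉ A ∧ j ∈ G a}

noncomputable def winners (k : ℕ) (G : α → Finset α) (A : Finset α) : Finset α :=
  topSubset k A (outsideIndeg G A)

noncomputable def randomPartition (k : ℕ) (G : α → Finset α) (S : Finset α) : ℝ :=
  𝔼 A, 𝔼 S' ∈ completions k (winners k G A), if S' = S then 1 else 0

variable {k : ℕ} {G : α → Finset α}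

theorem card_winners_le (A : Finset α) : #(winners k G A) ≤ k :=
  (card_topSubset _ _ _).trans_le (min_le_left _ _)

theorem sum_randomPartition_mul (F : Finset α → ℝ) :
    ∑ S, randomPartition k G S * F S = 𝔼 A, 𝔼 S ∈ completions k (winners k G A), F S := by
  simp_rw [randomPartition, expect_mul, ← expect_sum_comm, ite_mul, one_mul, zero_mul, sum_ite_eq,
    mem_univ, if_true]

theorem randomPartition_nonneg (S : Finset α) : 0 ≤ randomPartition k G S :=
  expect_nonneg fun _ _ => expect_nonneg fun _ _ => by positivity

theorem sum_randomPartition (hk : k ≤ Fintype.card α) : ∑ S, randomPartition k G S = 1 := by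
  simpa [expect_const (completions_nonempty (card_winners_le _) hk)] using
    sum_randomPartition_mul (k := k) (G := G) fun _ => 1

theorem card_of_randomPartition_ne_zero {S : Finset α} (h : randomPartition k G S ≠ 0) :
    #S = k := by
  obtain ⟨A, -, hA⟩ := exists_ne_zero_of_expect_ne_zero h
  obtain ⟨S', hS', hS'S⟩ := exists_ne_zero_of_expect_ne_zero hA
  rw [← (ite_ne_right_iff.mp hS'S).1]
  exact (mem_completions.mp hS').1

theorem winners_eq_of_mem {G' : α → Finset α} {i : α} {A : Finset α} (hi : i ∈ A)
    (hGG' : ∀ a, a ≠ i → G a = G' a) : winners k G A = winners k G' A := by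
  have h : outsideIndeg G A = outsideIndeg G' A := by
    funext j
    refine congrArg card (filter_congr fun a _ => and_congr_right fun ha => ?_)
    rw [hGG' a (by rintro rfl; exact ha hi)]
  rw [winners, winners, h]

theorem sum_filter_mem_randomPartition (i : α) :
    ∑ S with i ∈ S, randomPartition k G S =
      𝔼 A, 𝔼 S ∈ completions k (winners k G A), if i ∈ S then 1 else 0 := by
  rw [← sum_randomPartition_mul, sum_filter]
  simp_rw [mul_boole]

theorem sum_filter_mem_randomPartition_eq {G' : α → Finset α} {i : α}
    (hGG' : ∀ a, a ≠ i → G a = G' a) :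
    ∑ S with i ∈ S, randomPartition k G S = ∑ S with i ∈ S, randomPartition k G' S := by
  rw [sum_filter_mem_randomPartition, sum_filter_mem_randomPartition]
  refine expect_congr rfl fun A _ => ?_
  by_cases hi : i ∈ A
  · rw [winners_eq_of_mem hi hGG']
  have hiT : ∀ G : α → Finset α, i ∉ winners k G A := fun _ h => hi (topSubset_subset _ _ _ h)
  have hcard : ∀ G : α → Finset α, #(winners k G A) = min k #A := fun _ => card_topSubset _ _ _
  rw [expect_eq_sum_div_card, expect_eq_sum_div_card, sum_boole, sum_boole,
    card_filter_mem_completions_eq (hiT G) (hiT G') (card_winners_le A) (by rw [hcard, hcard]),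
    card_completions (card_winners_le A), card_completions (card_winners_le A), hcard, hcard]

theorem outsideIndeg_le_indeg (A : Finset α) (j : α) : outsideIndeg G A j ≤ indeg G j :=
  card_le_card (monotone_filter_right univ fun _ _ => And.right)

theorem sum_inter_outsideIndeg_le {K : Finset α} (hK : #K ≤ k) (A : Finset α) :
    ∑ j ∈ K ∩ A, outsideIndeg G A j ≤ ∑ j ∈ winners k G A, indeg G j :=
  calc ∑ j ∈ K ∩ A, outsideIndeg G A j ≤ ∑ j ∈ winners k G A, outsideIndeg G A j :=
        sum_le_sum_topSubset k A _ inter_subset_right ((card_le_card inter_subset_left).trans hK)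
    _ ≤ _ := sum_le_sum fun j _ => outsideIndeg_le_indeg A j

theorem sum_inter_outsideIndeg_eq (A K : Finset α) :
    ∑ j ∈ K ∩ A, (outsideIndeg G A j : ℝ) =
      ∑ j ∈ K, ∑ a with j ∈ G a, if j ∈ A ∧ a ∉ A then 1 else 0 := by
  rw [← filter_mem_eq_inter, sum_filter]
  refine sum_congr rfl fun j _ => ?_
  by_cases hj : j ∈ A
  · simp only [hj, outsideIndeg, natCast_card_filter, sum_filter, true_and]
    exact sum_congr rfl fun a _ => by split_ifs <;> simp_all
  · simp [hj]

theorem expect_sum_inter_outsideIndeg (hG : ∀ a, a ∉ G a) (K : Finset α) :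
    𝔼 A, ∑ j ∈ K ∩ A, (outsideIndeg G A j : ℝ) = 4⁻¹ * ∑ j ∈ K, (indeg G j : ℝ) := by
  simp_rw [sum_inter_outsideIndeg_eq, expect_sum_comm, mul_sum]
  refine sum_congr rfl fun j _ => ?_
  have hquarter : ∀ a ∈ ({a | j ∈ G a} : Finset α),
      𝔼 A : Finset α, (if j ∈ A ∧ a ∉ A then 1 else 0 : ℝ) = 4⁻¹ := fun a ha =>
    expect_mem_notMem (by rintro rfl; exact hG a (mem_filter.mp ha).2)
  rw [sum_congr rfl hquarter, sum_const, indeg, nsmul_eq_mul, mul_comm]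

theorem sum_indeg_le_four_mul (hk : k ≤ Fintype.card α) (hG : ∀ a, a ∉ G a) {K : Finset α}
    (hK : #K ≤ k) :
    ∑ j ∈ K, (indeg G j : ℝ) ≤ 4 * ∑ S, randomPartition k G S * ∑ j ∈ S, (indeg G j : ℝ) := by
  have hA (A : Finset α) : ∑ j ∈ K ∩ A, (outsideIndeg G A j : ℝ) ≤
      𝔼 S ∈ completions k (winners k G A), ∑ j ∈ S, (indeg G j : ℝ) := by
    refine le_expect (completions_nonempty (card_winners_le A) hk) fun S hS => ?_
    calc ∑ j ∈ K ∩ A, (outsideIndeg G A j : ℝ) ≤ ∑ j ∈ winners k G A, (indeg G j : ℝ) := by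
          exact_mod_cast sum_inter_outsideIndeg_le hK A
      _ ≤ _ := sum_le_sum_of_subset_of_nonneg (mem_completions.mp hS).2 fun _ _ _ => by positivity
  have hE := expect_le_expect (s := univ) fun A _ => hA A
  rw [expect_sum_inter_outsideIndeg hG] at hE
  rw [sum_randomPartition_mul]
  linarith

end Mechanism

end RandomPartition

theorem stmt_3_general (n k : ℕ) (hk2 : k ≤ n - 1) :
    ∃ f : (Fin n → Finset (Fin n)) → Finset (Fin n) → ℝ,
      (∀ G S, 0 ≤ f G S) ∧
      (∀ G : Fin n → Finset (Fin n), (∀ i, i ∉ G i) →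
        ∑ S : Finset (Fin n), f G S = 1) ∧
      (∀ (G : Fin n → Finset (Fin n)) (S : Finset (Fin n)), (∀ i, i ∉ G i) →
        f G S ≠ 0 → S.card = k) ∧
      (∀ (i : Fin n) (G G' : Fin n → Finset (Fin n)),
        (∀ a, a ∉ G a) → (∀ a, a ∉ G' a) → (∀ a, a ≠ i → G a = G' a) →
        ∑ S ∈ Finset.univ.filter (fun S : Finset (Fin n) => i ∈ S), f G S =
          ∑ S ∈ Finset.univ.filter (fun S : Finset (Fin n) => i ∈ S), f G' S) ∧
      (∀ G : Fin n → Finset (Fin n), (∀ i, i ∉ G i) →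
        ∀ K : Finset (Fin n), K.card = k →
          (∑ j ∈ K, ((Finset.univ.filter (fun i => j ∈ G i)).card : ℝ)) ≤
            4 * ∑ S : Finset (Fin n),
              f G S * ∑ j ∈ S, ((Finset.univ.filter (fun i => j ∈ G i)).card : ℝ)) := by
  have hk : k ≤ Fintype.card (Fin n) := by rw [Fintype.card_fin]; omega
  open RandomPartition in
  exact ⟨randomPartition k, fun _ => randomPartition_nonneg, fun _ _ => sum_randomPartition hk,
    fun _ _ _ => card_of_randomPartition_ne_zero,
    fun _ _ _ _ _ => sum_filter_mem_randomPartition_eq,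
    fun _ hG _ hK => sum_indeg_le_four_mul hk hG hK.le⟩

/-- for every `n ≥ 2` and `1 ≤ k ≤ n-1` there is a randomized
strategyproof `k`-selection mechanism with approximation ratio at most 4.
A randomized mechanism is modelled by the probabilities `f G S` of selecting
a set `S`; it must be a probability distribution supported on `k`-subsets,
the winning probability of each agent must be independent of its own reported
outgoing edges, and for every valid graph the optimal total indegree of a
`k`-subset is at most 4 times the expected total indegree of the selection. -/
theorem stmt_3 (n k : ℕ) (hn : 2 ≤ n) (hk1 : 1 ≤ k) (hk2 : k ≤ n - 1) :
    ∃ f : (Fin n → Finset (Fin n)) → Finset (Fin n) → ℝ,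
      (∀ G S, 0 ≤ f G S) ∧
      (∀ G : Fin n → Finset (Fin n), (∀ i, i ∉ G i) →
        ∑ S : Finset (Fin n), f G S = 1) ∧
      (∀ (G : Fin n → Finset (Fin n)) (S : Finset (Fin n)), (∀ i, i ∉ G i) →
        f G S ≠ 0 → S.card = k) ∧
      (∀ (i : Fin n) (G G' : Fin n → Finset (Fin n)),
        (∀ a, a ∉ G a) → (∀ a, a ∉ G' a) → (∀ a, a ≠ i → G a = G' a) →
        ∑ S ∈ Finset.univ.filter (fun S : Finset (Fin n) => i ∈ S), f G S =
          ∑ S ∈ Finset.univ.filter (fun S : Finset (Fin n) => i ∈ S), f G' S) ∧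
      (∀ G : Fin n → Finset (Fin n), (∀ i, i ∉ G i) →
        ∀ K : Finset (Fin n), K.card = k →
          (∑ j ∈ K, ((Finset.univ.filter (fun i => j ∈ G i)).card : ℝ)) ≤
            4 * ∑ S : Finset (Fin n),
              f G S * ∑ j ∈ S, ((Finset.univ.filter (fun i => j ∈ G i)).card : ℝ)) :=
  stmt_3_general n k hk2
end

section
/- Fix a labeling π : N → {1,…,m} (a partition of the agents into m parts P_t = π^{-1}(t)) and quotas q : {1,…,m} → ℕ. For a graph G, define the cross-indegree of agent j as crossdeg(j,G) = |{i ∈ N : π(i) ≠ π(j) and j ∈ E_G(i)}|. Let f be the deterministic mechanism that, for each part t, selects the min(q_t, |P_t|) agents of P_t that are greatest with respect to the order comparing first cross-indegree (higher is better) and then index (smaller is better), and returns the union of these selections. Then f is strategyproof: for every agent i and all graphs G, G' with E_G(a) = E_{G'}(a) for all a ≠ i, we have i ∈ f(G) ⟺ i ∈ f(G'). -/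
/-- The cross-indegree of agent `j`: number of incoming edges from agents in
other parts of the fixed partition `π`. -/
def crossdeg {n m : ℕ} (π : Fin n → Fin m) (G : Fin n → Finset (Fin n))
    (j : Fin n) : ℕ :=
  (Finset.univ.filter (fun i => π i ≠ π j ∧ j ∈ G i)).card

/-- Agent `i` beats agent `j` (within a part) if it has strictly larger
cross-indegree, or equal cross-indegree and smaller index. -/
def beats {n m : ℕ} (π : Fin n → Fin m) (G : Fin n → Finset (Fin n))
    (i j : Fin n) : Prop :=
  crossdeg π G j < crossdeg π G i ∨ (crossdeg π G i = crossdeg π G j ∧ i < j)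

instance {n m : ℕ} (π : Fin n → Fin m) (G : Fin n → Finset (Fin n))
    (i j : Fin n) : Decidable (beats π G i j) := by
  unfold beats; infer_instance

/-- The fixed-partition mechanism: from each part `P_t = π⁻¹(t)` it selects the
top `min (q t) |P_t|` agents with respect to the order comparing cross-indegree
(higher better), ties broken towards smaller index. An agent is selected iff
fewer than `min (q t) |P_t|` agents of its own part beat it. -/
def partitionSel {n m : ℕ} (π : Fin n → Fin m) (q : Fin m → ℕ)
    (G : Fin n → Finset (Fin n)) : Finset (Fin n) :=
  Finset.univ.filter (fun j =>
    ((Finset.univ.filter (fun i => π i = π j)).filter (fun i => beats π G i j)).card <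
      min (q (π j)) ((Finset.univ.filter (fun i => π i = π j)).card))

/-- the fixed-partition top-quota mechanism is strategyproof. -/
theorem stmt_5 (n m : ℕ) (π : Fin n → Fin m) (q : Fin m → ℕ)
    (i : Fin n) (G G' : Fin n → Finset (Fin n))
    (hG : ∀ a, a ∉ G a) (hG' : ∀ a, a ∉ G' a)
    (hdev : ∀ a, a ≠ i → G a = G' a) :
    i ∈ partitionSel π q G ↔ i ∈ partitionSel π q G' := by
  have hdeg : ∀ j : Fin n, π j = π i → crossdeg π G j = crossdeg π G' j := by
    intro j hj
    unfold crossdeg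
    congr 1
    apply Finset.filter_congr
    intro a _
    by_cases ha : a = i
    · subst ha
      simp [hj]
    · rw [hdev a ha]
  have hbeats : ∀ a : Fin n, π a = π i → (beats π G a i ↔ beats π G' a i) := by
    intro a ha
    unfold beats
    rw [hdeg a ha, hdeg i rfl]
  have hfilter :
      (Finset.univ.filter (fun a => π a = π i)).filter (fun a => beats π G a i) =
      (Finset.univ.filter (fun a => π a = π i)).filter (fun a => beats π G' a i) := by
    apply Finset.filter_congr
    intro a haa
    simp only [Finset.mem_filter] at haa
    simp [hbeats a haa.2]
  simp only [partitionSel, Finset.mem_filter, Finset.mem_univ, true_and]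
  rw [hfilter]
end

section
/- For every n ≥ 2 there exists a deterministic strategyproof mechanism f on N = {1,…,n} mapping each directed graph G on N to a nonempty subset f(G) ⊆ N with |f(G)| ≤ 2, such that whenever G contains at least one edge, some agent of f(G) has positive indegree in G. -/
open Finset

namespace Stmt11Aux

variable {n : ℕ}

def upSet (G : Fin n → Finset (Fin n)) : Finset (Fin n) :=
  univ.filter (fun j => ∃ i, i < j ∧ j ∈ G i)

def downSet (G : Fin n → Finset (Fin n)) : Finset (Fin n) :=
  univ.filter (fun j => ∃ i, j < i ∧ j ∈ G i)

def mech (hn : 0 < n) (G : Fin n → Finset (Fin n)) : Finset (Fin n) :=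
  (if h : (upSet G).Nonempty then {(upSet G).min' h} else ∅) ∪
  (if h : (downSet G).Nonempty then {(downSet G).max' h} else {⟨0, hn⟩})

lemma mem_mech_iff (hn : 0 < n) (G : Fin n → Finset (Fin n)) (a : Fin n) :
    a ∈ mech hn G ↔
      (a ∈ upSet G ∧ ∀ b < a, b ∉ upSet G) ∨
      (a ∈ downSet G ∧ ∀ b, a < b → b ∉ downSet G) ∨
      ((∀ b, b ∉ downSet G) ∧ a = ⟨0, hn⟩) := by
  unfold mech
  rw [mem_union]
  constructor
  · rintro (h | h)
    · split_ifs at h with hu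
      · rw [mem_singleton] at h
        subst h
        left
        refine ⟨min'_mem _ hu, fun b hb hbmem => ?_⟩
        exact absurd (min'_le _ _ hbmem) (not_le.mpr hb)
      · simp at h
    · split_ifs at h with hd
      · rw [mem_singleton] at h
        subst h
        right; left
        refine ⟨max'_mem _ hd, fun b hb hbmem => ?_⟩
        exact absurd (le_max' _ _ hbmem) (not_le.mpr hb)
      · right; right
        rw [mem_singleton] at h
        exact ⟨fun b hb => hd ⟨b, hb⟩, h⟩
  · rintro (⟨ha, hmin⟩ | ⟨ha, hmax⟩ | ⟨hd, ha⟩)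
    · left
      have hu : (upSet G).Nonempty := ⟨a, ha⟩
      rw [dif_pos hu, mem_singleton]
      have h1 : (upSet G).min' hu ≤ a := min'_le _ _ ha
      rcases lt_or_eq_of_le h1 with h | h
      · exact absurd (min'_mem _ hu) (hmin _ h)
      · exact h.symm
    · right
      have hd : (downSet G).Nonempty := ⟨a, ha⟩
      rw [dif_pos hd, mem_singleton]
      have h1 : a ≤ (downSet G).max' hd := le_max' _ _ ha
      rcases lt_or_eq_of_le h1 with h | h
      · exact absurd (max'_mem _ hd) (hmax _ h)
      · exact h
    · right
      have hd : ¬ (downSet G).Nonempty := fun ⟨b, hb⟩ => hd b hb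
      rw [dif_neg hd, mem_singleton]
      exact ha

end Stmt11Aux

open Stmt11Aux in
/-- for every `n ≥ 2` there is a deterministic strategyproof
mechanism selecting a nonempty set of at most two agents such that whenever the
graph has an edge, some selected agent has positive indegree. -/
theorem stmt_11 (n : ℕ) (hn : 2 ≤ n) :
    ∃ f : (Fin n → Finset (Fin n)) → Finset (Fin n),
      (∀ G : Fin n → Finset (Fin n), (∀ i, i ∉ G i) →
        (f G).Nonempty ∧ (f G).card ≤ 2) ∧
      (∀ (i : Fin n) (G G' : Fin n → Finset (Fin n)),
        (∀ a, a ∉ G a) → (∀ a, a ∉ G' a) → (∀ a, a ≠ i → G a = G' a) →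
        (i ∈ f G ↔ i ∈ f G')) ∧
      (∀ G : Fin n → Finset (Fin n), (∀ i, i ∉ G i) → (∃ i j, j ∈ G i) →
        ∃ j ∈ f G, 0 < (Finset.univ.filter (fun i => j ∈ G i)).card) := by
  have hn0 : 0 < n := by omega
  refine ⟨mech hn0, ?_, ?_, ?_⟩
  · intro G _
    constructor
    · -- nonempty: the second component of the union is always a singleton
      rcases Finset.eq_empty_or_nonempty (downSet G) with hd | hd
      · refine ⟨⟨0, hn0⟩, ?_⟩
        rw [mem_mech_iff]
        right; right
        exact ⟨fun b hb => by rw [hd] at hb; exact absurd hb (Finset.notMem_empty b), rfl⟩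
      · refine ⟨(downSet G).max' hd, ?_⟩
        unfold mech
        rw [mem_union, dif_pos hd]
        right; exact mem_singleton_self _
    · -- card ≤ 2
      unfold mech
      refine le_trans (card_union_le _ _) ?_
      have h1 : (if h : (upSet G).Nonempty then ({(upSet G).min' h} : Finset (Fin n)) else ∅).card ≤ 1 := by
        split_ifs <;> simp
      have h2 : (if h : (downSet G).Nonempty then ({(downSet G).max' h} : Finset (Fin n)) else {⟨0, hn0⟩}).card ≤ 1 := by
        split_ifs <;> simp
      omega
  · -- strategyproofness
    intro a G G' _ _ hagree
    have upIff : ∀ b : Fin n, b ≤ a → (b ∈ upSet G ↔ b ∈ upSet G') := by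
      intro b hba
      unfold upSet
      simp only [mem_filter, mem_univ, true_and]
      constructor
      · rintro ⟨i, hi, hmem⟩
        refine ⟨i, hi, ?_⟩
        rw [← hagree i (by exact ne_of_lt (lt_of_lt_of_le hi hba))]
        exact hmem
      · rintro ⟨i, hi, hmem⟩
        refine ⟨i, hi, ?_⟩
        rw [hagree i (by exact ne_of_lt (lt_of_lt_of_le hi hba))]
        exact hmem
    have downIff : ∀ b : Fin n, a ≤ b → (b ∈ downSet G ↔ b ∈ downSet G') := by
      intro b hab
      unfold downSet
      simp only [mem_filter, mem_univ, true_and]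
      constructor
      · rintro ⟨i, hi, hmem⟩
        refine ⟨i, hi, ?_⟩
        rw [← hagree i (by exact (ne_of_lt (lt_of_le_of_lt hab hi)).symm)]
        exact hmem
      · rintro ⟨i, hi, hmem⟩
        refine ⟨i, hi, ?_⟩
        rw [hagree i (by exact (ne_of_lt (lt_of_le_of_lt hab hi)).symm)]
        exact hmem
    rw [mem_mech_iff, mem_mech_iff]
    apply or_congr
    · exact and_congr (upIff a le_rfl) (forall_congr' fun b =>
        imp_congr_right fun hb => not_congr (upIff b (le_of_lt hb)))
    apply or_congr
    · exact and_congr (downIff a le_rfl) (forall_congr' fun b =>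
        imp_congr_right fun hb => not_congr (downIff b (le_of_lt hb)))
    · by_cases ha : a = ⟨0, hn0⟩
      · subst ha
        exact and_congr (forall_congr' fun b => not_congr
          (downIff b (by simp [Fin.le_def]))) Iff.rfl
      · simp [ha]
  · -- coverage
    intro G hirr ⟨i, j, hij⟩
    have hne : i ≠ j := fun h => hirr i (h ▸ hij)
    rcases lt_or_gt_of_ne hne with hlt | hgt
    · -- upward edge: min' of upSet is selected
      have hu : (upSet G).Nonempty := ⟨j, by
        unfold upSet; simp only [mem_filter, mem_univ, true_and]; exact ⟨i, hlt, hij⟩⟩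
      refine ⟨(upSet G).min' hu, ?_, ?_⟩
      · unfold mech
        rw [mem_union, dif_pos hu]
        left; exact mem_singleton_self _
      · have hm := min'_mem _ hu
        unfold upSet at hm
        simp only [mem_filter, mem_univ, true_and] at hm
        obtain ⟨i', _, hmem⟩ := hm
        rw [card_pos]
        exact ⟨i', mem_filter.mpr ⟨mem_univ _, hmem⟩⟩
    · -- downward edge: max' of downSet is selected
      have hd : (downSet G).Nonempty := ⟨j, by
        unfold downSet; simp only [mem_filter, mem_univ, true_and]; exact ⟨i, hgt, hij⟩⟩
      refine ⟨(downSet G).max' hd, ?_, ?_⟩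
      · unfold mech
        rw [mem_union, dif_pos hd]
        right; exact mem_singleton_self _
      · have hm := max'_mem _ hd
        unfold downSet at hm
        simp only [mem_filter, mem_univ, true_and] at hm
        obtain ⟨i', _, hmem⟩ := hm
        rw [card_pos]
        exact ⟨i', mem_filter.mpr ⟨mem_univ _, hmem⟩⟩
end

section
/- There exist a constant C > 0 and a threshold k₀ such that for every integer k ≥ k₀ the following holds: if Z is a binomial random variable with k−1 independent trials and success probability k^{−1/3}, then E[ ((k−1−Z)/(k−1)) · min(1, k^{2/3}/(Z+1)) ] ≥ 1 − C·k^{−1/3}. -/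
/-!
With `n = k - 1`, `p = k^{-1/3}` and `m = k^{2/3}`, the integrand is a product of two factors
at most `1`, hence at least their sum minus `1`. The first factor `1 - s/n` is linear in `s`; the
second is bounded below by a quadratic in `s` through two AM–GM steps,
`min 1 (m/x) ≥ 2 - x/m = 1 - (x - m)/m ≥ 1 - ((x - m)^2/(2t) + t/2)/m` for every `t > 0`.
The expectation of this quadratic lower bound only involves the first two binomial moments, and
with `t = k^{1/3}` (the order of the standard deviation) and `E[Z] + 1 - m = 1 - p` it is at
least `1 - 2p`.
-/

open Finset Polynomial

section BinomialMoments

variable {R : Type*} [CommRing R] (n : ℕ) (p : R)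

def binomialWeight (s : ℕ) : R :=
  n.choose s * p ^ s * (1 - p) ^ (n - s)

theorem sum_binomialWeight :
    ∑ s ∈ range (n + 1), binomialWeight n p s = 1 := by
  simpa [binomialWeight, bernsteinPolynomial, eval_finsetSum] using
    congrArg (eval p) (bernsteinPolynomial.sum R n)

theorem sum_mul_binomialWeight :
    ∑ s ∈ range (n + 1), (s : R) * binomialWeight n p s = n * p := by
  simpa [binomialWeight, bernsteinPolynomial, eval_finsetSum, nsmul_eq_mul] using
    congrArg (eval p) (bernsteinPolynomial.sum_smul R n)

theorem sum_sub_sq_mul_binomialWeight :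
    ∑ s ∈ range (n + 1), (n * p - s) ^ 2 * binomialWeight n p s =
      n * p * (1 - p) := by
  simpa [binomialWeight, bernsteinPolynomial, eval_finsetSum, nsmul_eq_mul] using
    congrArg (eval p) (bernsteinPolynomial.variance R n)

theorem sum_sq_sub_mul_binomialWeight (a : R) :
    ∑ s ∈ range (n + 1), (s - a) ^ 2 * binomialWeight n p s =
      n * p * (1 - p) + (n * p - a) ^ 2 := by
  have hsplit :
      ∑ s ∈ range (n + 1), (s - a) ^ 2 * binomialWeight n p s =
        ∑ s ∈ range (n + 1), (n * p - s) ^ 2 * binomialWeight n p s +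
          2 * (n * p - a) *
            ∑ s ∈ range (n + 1), (s : R) * binomialWeight n p s -
          (n * p - a) * (n * p + a) *
            ∑ s ∈ range (n + 1), binomialWeight n p s := by
    simp only [mul_sum, ← sum_add_distrib, ← sum_sub_distrib]
    exact sum_congr rfl fun s _ => by ring
  rw [hsplit, sum_sub_sq_mul_binomialWeight, sum_mul_binomialWeight,
    sum_binomialWeight]
  ring

end BinomialMoments

theorem binomialWeight_nonneg {R : Type*} [CommRing R] [PartialOrder R] [IsOrderedRing R]
    {n : ℕ} {p : R} (hp0 : 0 ≤ p) (hp1 : p ≤ 1) (s : ℕ) : 0 ≤ binomialWeight n p s :=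
  mul_nonneg (mul_nonneg (Nat.cast_nonneg _) (pow_nonneg hp0 _)) (pow_nonneg (sub_nonneg.2 hp1) _)

theorem add_sub_one_le_mul {α : Type*} [CommRing α] [LinearOrder α] [IsStrictOrderedRing α]
    {a b : α} (ha : a ≤ 1) (hb : b ≤ 1) : a + b - 1 ≤ a * b := by
  nlinarith [mul_nonneg (sub_nonneg.2 ha) (sub_nonneg.2 hb)]

theorem one_sub_le_min_one_div {m x t : ℝ} (hm : 0 < m) (hx : 0 < x) (ht : 0 < t) :
    1 - ((x - m) ^ 2 / (2 * t) + t / 2) / m ≤ min 1 (m / x) := by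
  refine le_min (sub_le_self _ (by positivity)) ?_
  have hamgm_t : x - m ≤ (x - m) ^ 2 / (2 * t) + t / 2 := by
    rw [div_add_div _ _ (by positivity) two_ne_zero, le_div_iff₀ (by positivity)]
    nlinarith [sq_nonneg (x - m - t)]
  have hamgm_m : 2 - x / m ≤ m / x := by
    rw [sub_le_iff_le_add, div_add_div _ _ hx.ne' hm.ne', le_div_iff₀ (by positivity)]
    nlinarith [sq_nonneg (x - m)]
  calc 1 - ((x - m) ^ 2 / (2 * t) + t / 2) / m ≤ 1 - (x - m) / m := by gcongr
    _ = 2 - x / m := by field_simp; ring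
    _ ≤ m / x := hamgm_m

theorem le_sum_binomialWeight_mul_min {n : ℕ} (hn : 0 < n) {p m t : ℝ}
    (hp0 : 0 ≤ p) (hp1 : p ≤ 1) (hm : 0 < m) (ht : 0 < t) :
    1 - p - ((n * p * (1 - p) + (n * p + 1 - m) ^ 2) / (2 * t) + t / 2) / m ≤
      ∑ s ∈ range (n + 1), binomialWeight n p s *
        (((n : ℝ) - s) / n * min 1 (m / (s + 1))) := by
  have hn' : (0 : ℝ) < n := Nat.cast_pos.2 hn
  calc 1 - p - ((n * p * (1 - p) + (n * p + 1 - m) ^ 2) / (2 * t) + t / 2) / m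
      = ∑ s ∈ range (n + 1), binomialWeight n p s *
          ((1 - s / n) + (1 - ((s + 1 - m) ^ 2 / (2 * t) + t / 2) / m) - 1) := by
        have hexpand : ∑ s ∈ range (n + 1), binomialWeight n p s *
              ((1 - s / n) + (1 - ((s + 1 - m) ^ 2 / (2 * t) + t / 2) / m) - 1) =
            (1 - t / (2 * m)) * ∑ s ∈ range (n + 1), binomialWeight n p s
              - 1 / n * ∑ s ∈ range (n + 1), (s : ℝ) * binomialWeight n p s
              - 1 / (2 * t * m) * ∑ s ∈ range (n + 1),
                  ((s : ℝ) - (m - 1)) ^ 2 * binomialWeight n p s := by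
          simp only [mul_sum, ← sum_sub_distrib]
          exact sum_congr rfl fun s _ => by field_simp; ring
        rw [hexpand, sum_binomialWeight, sum_mul_binomialWeight,
          sum_sq_sub_mul_binomialWeight]
        field_simp
        ring
    _ ≤ _ := by
        refine sum_le_sum fun s _ => mul_le_mul_of_nonneg_left ?_ ?_
        · have hs : (0 : ℝ) ≤ s := s.cast_nonneg
          rw [one_sub_div hn'.ne']
          calc ((n : ℝ) - s) / n + (1 - ((s + 1 - m) ^ 2 / (2 * t) + t / 2) / m) - 1
              ≤ ((n : ℝ) - s) / n + min 1 (m / (s + 1)) - 1 := by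
                gcongr
                exact one_sub_le_min_one_div hm (by positivity) ht
            _ ≤ _ := add_sub_one_le_mul ((div_le_one hn').2 (by linarith)) (min_le_left _ _)
        · exact binomialWeight_nonneg hp0 hp1 s

theorem one_sub_two_mul_le_of_mul_pow_three_eq_one {n p : ℝ} (hp0 : 0 < p) (hp1 : p ≤ 1)
    (hnp : (n + 1) * p ^ 3 = 1) :
    1 - 2 * p ≤ 1 - p - ((n * p * (1 - p) + (n * p + 1 - (n + 1) * p) ^ 2) /
      (2 * ((n + 1) * p ^ 2)) + (n + 1) * p ^ 2 / 2) / ((n + 1) * p) := by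
  have hk : 0 < n + 1 := by nlinarith [pow_pos hp0 3]
  have hkp2 : 1 ≤ (n + 1) * p ^ 2 := by nlinarith
  have hvar : n * p * (1 - p) + (1 - p) ^ 2 ≤ (n + 1) * p := by nlinarith
  have hsimp : ((n * p * (1 - p) + (n * p + 1 - (n + 1) * p) ^ 2) / (2 * ((n + 1) * p ^ 2))
      + (n + 1) * p ^ 2 / 2) / ((n + 1) * p) =
        (n * p * (1 - p) + (1 - p) ^ 2) / (2 * (n + 1)) + p / 2 := by
    field_simp
    linear_combination (-(n * p * (1 - p) + (1 - p) ^ 2)) * hnp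
  have hvar' : (n * p * (1 - p) + (1 - p) ^ 2) / (2 * (n + 1)) ≤ p / 2 := by
    rw [div_le_iff₀ (by positivity)]
    linarith
  rw [hsimp]
  linarith

/-- there are `C > 0` and a threshold `k₀` such that for all
`k ≥ k₀`, if `Z ~ Bin(k-1, k^{-1/3})` then
`E[((k-1-Z)/(k-1)) · min(1, k^{2/3}/(Z+1))] ≥ 1 - C·k^{-1/3}`.
The expectation is written out as a sum over the binomial distribution. -/
theorem stmt_13 :
    ∃ C : ℝ, 0 < C ∧ ∃ k₀ : ℕ, ∀ k : ℕ, k₀ ≤ k →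
      1 - C * (k : ℝ) ^ (-(1/3 : ℝ)) ≤
        ∑ s ∈ Finset.range k,
          ((k - 1).choose s : ℝ) * ((k : ℝ) ^ (-(1/3 : ℝ))) ^ s *
            (1 - (k : ℝ) ^ (-(1/3 : ℝ))) ^ (k - 1 - s) *
            ((((k : ℝ) - 1 - s) / ((k : ℝ) - 1)) *
              min 1 ((k : ℝ) ^ ((2 : ℝ)/3) / ((s : ℝ) + 1))) := by
  refine ⟨2, two_pos, 2, fun k hk => ?_⟩
  obtain ⟨n, rfl⟩ : ∃ n, k = n + 1 := ⟨k - 1, by omega⟩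
  set p : ℝ := ((n + 1 : ℕ) : ℝ) ^ (-(1/3 : ℝ)) with hp
  have hp0 : 0 < p := by positivity
  have hp1 : p ≤ 1 := Real.rpow_le_one_of_one_le_of_nonpos (by simp) (by norm_num)
  have hnp : ((n : ℝ) + 1) * p ^ 3 = 1 := by
    rw [hp, ← Real.rpow_natCast, ← Real.rpow_mul (by positivity),
      show -(1/3 : ℝ) * (3 : ℕ) = -1 by norm_num, Real.rpow_neg_one]
    push_cast
    field_simp
  have hm : ((n + 1 : ℕ) : ℝ) ^ ((2 : ℝ) / 3) = (n + 1) * p := by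
    rw [hp, show (2 : ℝ) / 3 = 1 + -(1/3) by norm_num, Real.rpow_add (by positivity),
      Real.rpow_one]
    push_cast
    ring
  rw [hm]
  push_cast
  simp only [add_sub_cancel_right]
  exact (one_sub_two_mul_le_of_mul_pow_three_eq_one hp0 hp1 hnp).trans
    (le_sum_binomialWeight_mul_min (by omega) hp0.le hp1 (by positivity) (by positivity))
end
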